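/- arXiv:1505.01578 — 2 statements merged into one kernel-verified Lean document; each statement's English description precedes it below -/
import Mathlib

section
/- Let 1 ≤ k ≤ n and let λ ∈ Γ_k, where Γ_k = {λ ∈ ℝⁿ : σ_1(λ) > 0, σ_2(λ) > 0, …, σ_k(λ) > 0}. Then for every index i one has σ_{k-1}(λ|λ_i) > 0; in particular, for k = 2, σ_1(λ) − λ_i > 0 for every i. -/
/-!
If `λ_i ≤ 0`, the expansion `σ_m(λ|λ_i) = ∑_{r+j=m} (-λ_i)^r σ_j(λ)` shows at once that
`λ|λ_i ∈ Γ_k`. If `λ_i > 0` and all other entries are positive there is nothing to prove.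
Otherwise some other entry `b = λ_j` is `≤ 0`; deleting it keeps us in `Γ_k`, and by induction
on the number of entries the tuple `μ` obtained by deleting both `λ_i` and `λ_j` lies in
`Γ_{k-1}`. If then `σ_m(μ, b) = σ_m(μ) + b σ_{m-1}(μ) ≤ 0` for some `m ≤ k-1`, positivity of
`σ_{m+1}(λ)` forces `σ_{m+1}(μ) σ_{m-1}(μ) > σ_m(μ)²`, contradicting Newton's inequality.
Newton's inequality in turn comes from Rolle's theorem: differentiating `∏ (X + λ_j)` keeps it
real-rooted, and for a real-rooted polynomial `2 a₀ a₂ ≤ a₁²`.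
-/

/-- The k-th elementary symmetric polynomial of `x : Fin n → ℝ`. -/
def esymm (n k : ℕ) (x : Fin n → ℝ) : ℝ :=
  ∑ s ∈ Finset.powersetCard k (Finset.univ : Finset (Fin n)), ∏ i ∈ s, x i

/-- `σ_m(λ|λ_i)`: the m-th elementary symmetric polynomial of the (n−1)-tuple
obtained from `x` by deleting the entry `x i`. -/
def esymmDel (n m : ℕ) (x : Fin n → ℝ) (i : Fin n) : ℝ :=
  ∑ s ∈ Finset.powersetCard m ((Finset.univ : Finset (Fin n)).erase i), ∏ j ∈ s, x j

open Finset Polynomial Nat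

namespace Multiset

section CommSemiring

variable {R : Type*} [CommSemiring R] (s : Multiset R) (a : R)

theorem esymm_zero : s.esymm 0 = 1 := by
  simp [esymm]

theorem esymm_eq_zero_of_card_lt {m : ℕ} (h : card s < m) : s.esymm m = 0 := by
  simp [esymm, powersetCard_eq_empty _ h]

theorem esymm_cons_succ (m : ℕ) :
    (a ::ₘ s).esymm (m + 1) = s.esymm (m + 1) + a * s.esymm m := by
  simp only [esymm, powersetCard_cons, map_add, sum_add, map_map, Function.comp_def, prod_cons,
    sum_map_mul_left]

theorem factorial_mul_coeff_iterate_derivative_prod_X_add_C {q j : ℕ} (h : q + j ≤ card s) :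
    (j ! : R) * (derivative^[q] (s.map fun b => X + C b).prod).coeff j =
      (q + j)! * s.esymm (card s - (q + j)) := by
  rw [coeff_iterate_derivative, nsmul_eq_mul, add_comm j q, prod_X_add_C_coeff s h, ← mul_assoc]
  norm_cast
  rw [← Nat.factorial_mul_descFactorial (Nat.le_add_right q j), Nat.add_sub_cancel_left]

end CommSemiring

theorem esymm_eq_sum_antidiagonal_esymm_cons {R : Type*} [CommRing R] (s : Multiset R) (a : R)
    (m : ℕ) :
    s.esymm m = ∑ p ∈ HasAntidiagonal.antidiagonal m, (-a) ^ p.1 * (a ::ₘ s).esymm p.2 := by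
  induction m with
  | zero => simp [esymm_zero]
  | succ m ih =>
    have hsum : ∑ p ∈ HasAntidiagonal.antidiagonal m, (-a) ^ (p.1 + 1) * (a ::ₘ s).esymm p.2 =
        -a * s.esymm m := by
      rw [ih, mul_sum]
      exact sum_congr rfl fun p _ => by ring
    rw [Nat.sum_antidiagonal_succ, hsum, esymm_cons_succ]
    ring

section OrderedCommSemiring

variable {R : Type*} [CommSemiring R] [Preorder R]

def gardingCone (k : ℕ) : Set (Multiset R) :=
  {s | ∀ j, 1 ≤ j → j ≤ k → 0 < s.esymm j}

theorem gardingCone_anti : Antitone (gardingCone (R := R)) :=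
  fun _ _ hkl _ hs j hj1 hjk => hs j hj1 (hjk.trans hkl)

end OrderedCommSemiring

section LinearOrderedCommRing

variable {R : Type*} [CommRing R] [LinearOrder R] [IsStrictOrderedRing R] {s : Multiset R}
  {a : R} {k : ℕ}

theorem esymm_pos {m : ℕ} (hs : ∀ b ∈ s, 0 < b) (hm : m ≤ card s) : 0 < s.esymm m := by
  have hne : s.powersetCard m ≠ 0 := by
    rw [Ne, ← card_eq_zero, card_powersetCard]
    exact (Nat.choose_pos hm).ne'
  simpa [esymm] using sum_lt_sum_of_nonempty (f := fun _ => (0 : R)) hne fun t ht =>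
    prod_pos fun b hb => hs b (mem_of_le (mem_powersetCard.1 ht).1 hb)

/-- `σ_{N+1}² - 2 σ_{N+2} σ_N = ∑_i ∏_{j ≠ i} s_j²` when `card s = N + 2`. -/
theorem two_mul_esymm_mul_le_sq_of_card_eq {N : ℕ} (hs : card s = N + 2) :
    2 * s.esymm (N + 2) * s.esymm N ≤ s.esymm (N + 1) ^ 2 := by
  induction N generalizing s with
  | zero =>
    obtain ⟨x, y, rfl⟩ := card_eq_two.1 hs
    rw [insert_eq_cons, esymm_pair_one, esymm_pair_two, esymm_zero]
    nlinarith [sq_nonneg x, sq_nonneg y]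
  | succ N ih =>
    obtain ⟨a, ha⟩ := card_pos_iff_exists_mem.1 (by omega : 0 < card s)
    obtain ⟨u, rfl⟩ := exists_cons_of_mem ha
    have hu : card u = N + 2 := by simpa using hs
    have ha2 := mul_le_mul_of_nonneg_left (ih hu) (sq_nonneg a)
    simp only [esymm_cons_succ, esymm_eq_zero_of_card_lt u (by omega : card u < N + 3)]
    nlinarith [sq_nonneg (u.esymm (N + 2))]

theorem esymm_pos_of_mem_gardingCone (hs : s ∈ gardingCone k) {j : ℕ} (hj : j ≤ k) :
    0 < s.esymm j := by
  rcases j with _ | j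
  · simp [esymm_zero]
  · exact hs _ j.succ_pos hj

theorem le_card_of_mem_gardingCone (hs : s ∈ gardingCone k) : k ≤ card s := by
  by_contra! h
  exact (esymm_pos_of_mem_gardingCone hs le_rfl).ne' (esymm_eq_zero_of_card_lt s h)

theorem mem_gardingCone_of_cons_mem_of_nonpos (ha : a ≤ 0) (h : a ::ₘ s ∈ gardingCone k) :
    s ∈ gardingCone k := by
  intro m hm1 hm
  rw [esymm_eq_sum_antidiagonal_esymm_cons s a]
  refine sum_pos' (fun p hp => ?_) ⟨(0, m), by simp, by simpa using h m hm1 hm⟩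
  have hp2 : p.2 ≤ k := by
    rw [HasAntidiagonal.mem_antidiagonal] at hp
    omega
  exact mul_nonneg (pow_nonneg (neg_nonneg.2 ha) _) (esymm_pos_of_mem_gardingCone h hp2).le

end LinearOrderedCommRing

end Multiset

namespace Polynomial

theorem Splits.derivative {p : ℝ[X]} (hp : p.Splits) : (Polynomial.derivative p).Splits := by
  rw [splits_iff_card_roots] at hp ⊢
  rcases eq_or_ne p.natDegree 0 with h0 | h0
  · simp [derivative_of_natDegree_zero h0]
  · have hrolle := p.card_roots_le_derivative
    have hroots := (Polynomial.derivative p).card_roots'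
    have hdeg := p.natDegree_derivative_le
    omega

theorem Splits.iterate_derivative {p : ℝ[X]} (hp : p.Splits) (q : ℕ) :
    (Polynomial.derivative^[q] p).Splits := by
  induction q with
  | zero => exact hp
  | succ q ih => exact Function.iterate_succ_apply' Polynomial.derivative q p ▸ ih.derivative

theorem Splits.two_mul_coeff_zero_mul_coeff_two_le_sq {R : Type*} [CommRing R] [LinearOrder R]
    [IsStrictOrderedRing R] {p : R[X]} (hp : p.Splits) :
    2 * p.coeff 0 * p.coeff 2 ≤ p.coeff 1 ^ 2 := by
  rcases lt_or_ge p.natDegree 2 with hd | hd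
  · rw [coeff_eq_zero_of_natDegree_lt hd, mul_zero]
    exact sq_nonneg _
  obtain ⟨N, hN⟩ : ∃ N, p.natDegree = N + 2 := ⟨_, (Nat.sub_add_cancel hd).symm⟩
  have hcard : Multiset.card p.roots = p.natDegree := splits_iff_card_roots.1 hp
  have hroots := Multiset.two_mul_esymm_mul_le_sq_of_card_eq (hcard.trans hN)
  rw [coeff_eq_esymm_roots_of_card hcard (by omega), coeff_eq_esymm_roots_of_card hcard (by omega),
    coeff_eq_esymm_roots_of_card hcard (by omega), hN, Nat.sub_zero, Nat.add_sub_cancel,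
    show N + 2 - 1 = N + 1 by omega]
  calc _ = (p.leadingCoeff * (-1) ^ N) ^ 2 * (2 * p.roots.esymm (N + 2) * p.roots.esymm N) := by
        ring
    _ ≤ (p.leadingCoeff * (-1) ^ N) ^ 2 * p.roots.esymm (N + 1) ^ 2 :=
        mul_le_mul_of_nonneg_left hroots (sq_nonneg _)
    _ = _ := by ring

end Polynomial

namespace Multiset

/-- Newton's inequality, in the weak form without the binomial normalisation. -/
theorem esymm_mul_esymm_le_sq (s : Multiset ℝ) (K : ℕ) :
    s.esymm (K + 2) * s.esymm K ≤ s.esymm (K + 1) ^ 2 := by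
  rcases lt_or_ge (card s) (K + 2) with hs | hs
  · rw [esymm_eq_zero_of_card_lt s hs, zero_mul]
    exact sq_nonneg _
  obtain ⟨q, hq⟩ : ∃ q, card s = q + (K + 2) := ⟨_, (Nat.sub_add_cancel hs).symm⟩
  -- `r` is real-rooted by Rolle, and its three lowest coefficients are factorial multiples of
  -- `σ_{K+2}, σ_{K+1}, σ_K`.
  set r := derivative^[q] (s.map fun b => X + C b).prod
  have hr : r.Splits :=
    (Splits.multisetProd fun f hf => by
      obtain ⟨b, -, rfl⟩ := mem_map.1 hf
      exact Splits.X_add_C b).iterate_derivative q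
  have hcoeff (j : ℕ) (hj : j ≤ 2) : (j ! : ℝ) * r.coeff j = (q + j)! * s.esymm (K + 2 - j) := by
    rw [factorial_mul_coeff_iterate_derivative_prod_X_add_C s (by omega), hq]
    congr 2
    omega
  have c0 : r.coeff 0 = q ! * s.esymm (K + 2) := by simpa using hcoeff 0 (by norm_num)
  have c1 : r.coeff 1 = (q + 1)! * s.esymm (K + 1) := by simpa using hcoeff 1 (by norm_num)
  have c2 : 2 * r.coeff 2 = (q + 2)! * s.esymm K := by simpa using hcoeff 2 le_rfl
  have hcoeffs : (q ! * (q + 2)! : ℝ) * (s.esymm (K + 2) * s.esymm K) ≤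
      ((q + 1)! : ℝ) ^ 2 * s.esymm (K + 1) ^ 2 :=
    calc _ = 2 * r.coeff 0 * r.coeff 2 := by
          rw [c0]
          linear_combination -(q ! * s.esymm (K + 2)) * c2
      _ ≤ r.coeff 1 ^ 2 := hr.two_mul_coeff_zero_mul_coeff_two_le_sq
      _ = _ := by rw [c1]; ring
  have hfact : ((q + 1)! : ℝ) ^ 2 ≤ q ! * (q + 2)! := by
    norm_cast
    calc (q + 1)! ^ 2 = (q + 1)! * ((q + 1) * q !) := by rw [sq, factorial_succ]
      _ ≤ (q + 1)! * ((q + 2) * q !) := by gcongr; omega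
      _ = q ! * (q + 2)! := by rw [factorial_succ (q + 1)]; ring
  rcases le_or_gt (s.esymm (K + 2) * s.esymm K) 0 with hneg | hpos
  · exact hneg.trans (sq_nonneg _)
  refine le_of_mul_le_mul_left ?_ (by positivity : (0 : ℝ) < ((q + 1)! : ℝ) ^ 2)
  exact (mul_le_mul_of_nonneg_right hfact hpos.le).trans hcoeffs

variable {a b : ℝ} {s : Multiset ℝ} {k : ℕ}

theorem cons_mem_gardingCone_of_cons_cons_mem (ha : 0 ≤ a) (hs : s ∈ gardingCone k)
    (h : a ::ₘ b ::ₘ s ∈ gardingCone (k + 1)) : b ::ₘ s ∈ gardingCone k := by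
  rintro _ hj hjk
  obtain ⟨m, rfl⟩ : ∃ m, _ = m + 1 := ⟨_, (Nat.sub_add_cancel hj).symm⟩
  rw [esymm_cons_succ]
  by_contra! hneg
  have hm : 0 < s.esymm m := esymm_pos_of_mem_gardingCone hs (by omega)
  have hm1 : 0 < s.esymm (m + 1) := hs _ (by omega) hjk
  have hm2 := h (m + 2) (by omega) (by omega)
  rw [esymm_cons_succ, esymm_cons_succ, esymm_cons_succ] at hm2
  have hlt : -b * s.esymm (m + 1) < s.esymm (m + 2) := by
    nlinarith [mul_nonpos_of_nonneg_of_nonpos ha hneg]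
  have hnewton : s.esymm (m + 1) ^ 2 < s.esymm (m + 2) * s.esymm m :=
    calc s.esymm (m + 1) ^ 2 ≤ (-b * s.esymm m) * s.esymm (m + 1) := by
          rw [sq]
          exact mul_le_mul_of_nonneg_right (by linarith) hm1.le
      _ = (-b * s.esymm (m + 1)) * s.esymm m := by ring
      _ < s.esymm (m + 2) * s.esymm m := mul_lt_mul_of_pos_right hlt hm
  exact hnewton.not_ge (esymm_mul_esymm_le_sq s m)

theorem mem_gardingCone_of_cons_mem (h : a ::ₘ s ∈ gardingCone (k + 1)) : s ∈ gardingCone k := by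
  induction s using strongInductionOn generalizing a with
  | ih s ih =>
    rcases le_or_gt a 0 with ha | ha
    · exact gardingCone_anti k.le_succ (mem_gardingCone_of_cons_mem_of_nonpos ha h)
    by_cases hs : ∃ b ∈ s, b ≤ 0
    · obtain ⟨b, hbs, hb⟩ := hs
      obtain ⟨u, rfl⟩ := exists_cons_of_mem hbs
      have hau : a ::ₘ u ∈ gardingCone (k + 1) :=
        mem_gardingCone_of_cons_mem_of_nonpos hb (cons_swap a b u ▸ h)
      exact cons_mem_gardingCone_of_cons_cons_mem ha.le (ih u (lt_cons_self u b) hau) h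
    · push Not at hs
      have hk : k + 1 ≤ card s + 1 := card_cons a s ▸ le_card_of_mem_gardingCone h
      exact fun j _ hj => esymm_pos hs (by omega)

end Multiset

theorem esymm_eq_esymm_map_univ (n k : ℕ) (x : Fin n → ℝ) :
    esymm n k x = (Finset.univ.val.map x).esymm k :=
  (Finset.esymm_map_val x _ k).symm

theorem esymmDel_eq_esymm_map_erase (n m : ℕ) (x : Fin n → ℝ) (i : Fin n) :
    esymmDel n m x i = ((Finset.univ.erase i).val.map x).esymm m :=
  (Finset.esymm_map_val x _ m).symm

theorem Finset.map_val_eq_cons_map_erase_val {α β : Type*} [DecidableEq α] {s : Finset α} {i : α}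
    (hi : i ∈ s) (f : α → β) : s.val.map f = f i ::ₘ (s.erase i).val.map f := by
  rw [erase_val, ← Multiset.map_cons, Multiset.cons_erase (Finset.mem_def.1 hi)]

theorem esymm_succ_eq_esymmDel_add_mul_esymmDel (n m : ℕ) (x : Fin n → ℝ) (i : Fin n) :
    esymm n (m + 1) x = esymmDel n (m + 1) x i + x i * esymmDel n m x i := by
  rw [esymm_eq_esymm_map_univ, esymmDel_eq_esymm_map_erase, esymmDel_eq_esymm_map_erase,
    Finset.map_val_eq_cons_map_erase_val (Finset.mem_univ i), Multiset.esymm_cons_succ]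

theorem esymmDel_pos_of_gardingCone_general (n k : ℕ) (hk1 : 1 ≤ k) (x : Fin n → ℝ)
    (hx : ∀ j, 1 ≤ j → j ≤ k → 0 < esymm n j x) :
    (∀ i, 0 < esymmDel n (k - 1) x i) ∧
      (k = 2 → ∀ i, 0 < esymm n 1 x - x i) := by
  have hcone (i : Fin n) : (Finset.univ.erase i).val.map x ∈ Multiset.gardingCone (k - 1) := by
    refine Multiset.mem_gardingCone_of_cons_mem (a := x i) ?_
    rw [Nat.sub_add_cancel hk1, ← Finset.map_val_eq_cons_map_erase_val (Finset.mem_univ i)]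
    intro j hj hjk
    rw [← esymm_eq_esymm_map_univ]
    exact hx j hj hjk
  have hdel (i : Fin n) : 0 < esymmDel n (k - 1) x i := by
    rw [esymmDel_eq_esymm_map_erase]
    exact Multiset.esymm_pos_of_mem_gardingCone (hcone i) le_rfl
  refine ⟨hdel, fun hk i => ?_⟩
  subst hk
  have hdel0 : esymmDel n 0 x i = 1 := by
    rw [esymmDel_eq_esymm_map_erase, Multiset.esymm_zero]
  rw [esymm_succ_eq_esymmDel_add_mul_esymmDel n 0 x i, hdel0, mul_one, add_sub_cancel_right]
  exact hdel i

/-- for `λ` in the Gårding cone `Γ_k = {σ_1 > 0, …, σ_k > 0}`, one has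
`σ_{k-1}(λ|λ_i) > 0` for every `i`; in particular, for `k = 2`, `σ_1(λ) − λ_i > 0` for every `i`. -/
theorem esymmDel_pos_of_gardingCone (n k : ℕ) (hk1 : 1 ≤ k) (hkn : k ≤ n) (x : Fin n → ℝ)
    (hx : ∀ j, 1 ≤ j → j ≤ k → 0 < esymm n j x) :
    (∀ i, 0 < esymmDel n (k - 1) x i) ∧
      (k = 2 → ∀ i, 0 < esymm n 1 x - x i) :=
  esymmDel_pos_of_gardingCone_general n k hk1 x hx
end

section
/- Let n ≥ 2 and λ ∈ Γ_2 = {σ_1 > 0, σ_2 > 0} ⊂ ℝⁿ. Write λ_max = max_i λ_i and λ_min = min_i λ_i, and suppose λ_min ≤ −λ_max/n. Then Σ_{i=1}^n (σ_1(λ) − λ_i)·λ_i² ≥ (λ_max²/n³)·Σ_{i=1}^n (σ_1(λ) − λ_i). -/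
/-- The Gårding cone `Γ₂ = {λ : σ₁(λ) > 0, σ₂(λ) > 0}`. -/
def Gamma2 (n : ℕ) : Set (Fin n → ℝ) := {x | 0 < esymm n 1 x ∧ 0 < esymm n 2 x}

/-!
On `Γ₂` every weight `σ₁ − λᵢ` is positive, because `σ₁² = Σ λᵢ² + 2σ₂ > λᵢ²` (Newton's identity
in degree two). The largest weight is `σ₁ − λ_min`, so `Σᵢ (σ₁ − λᵢ) ≤ n (σ₁ − λ_min)`, and the
hypothesis `λ_min ≤ −λ_max/n` gives `λ_max² ≤ n² λ_min²`; the term `i = min` of the left-hand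
side alone then dominates.
-/

open MvPolynomial in
theorem MvPolynomial.esymm_one_sq (σ R : Type*) [Fintype σ] [CommRing R] :
    esymm σ R 1 ^ 2 = psum σ R 2 + 2 * esymm σ R 2 := by
  have newton := mul_esymm_eq_sum σ R 2
  rw [Finset.sum_filter, Finset.Nat.sum_antidiagonal_eq_sum_range_succ_mk] at newton
  norm_num [Finset.sum_range_succ, psum_one] at newton
  rw [esymm_one]
  linear_combination -newton

theorem esymm_eq_aeval (n k : ℕ) (x : Fin n → ℝ) :
    esymm n k x = MvPolynomial.aeval x (MvPolynomial.esymm (Fin n) ℝ k) := by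
  simp [esymm, MvPolynomial.esymm]

theorem esymm_one_sq_eq (n : ℕ) (x : Fin n → ℝ) :
    esymm n 1 x ^ 2 = ∑ i, x i ^ 2 + 2 * esymm n 2 x := by
  simpa [esymm_eq_aeval, MvPolynomial.psum] using
    congrArg (MvPolynomial.aeval x) (MvPolynomial.esymm_one_sq (Fin n) ℝ)

theorem esymm_one_sub_pos_of_mem_Gamma2 {n : ℕ} {x : Fin n → ℝ} (hx : x ∈ Gamma2 n)
    (i : Fin n) : 0 < esymm n 1 x - x i := by
  obtain ⟨h1, h2⟩ := hx
  have hsq : x i ^ 2 < esymm n 1 x ^ 2 := by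
    rw [esymm_one_sq_eq]
    linarith [Finset.single_le_sum (fun j _ => sq_nonneg (x j)) (Finset.mem_univ i)]
  exact sub_pos.mpr ((le_abs_self _).trans_lt (abs_lt_of_sq_lt_sq hsq h1.le))

theorem sq_le_sq_mul_sq_of_le_neg_div {a b c : ℝ} (hc : 1 ≤ c) (hba : b ≤ a)
    (h : b ≤ -a / c) : a ^ 2 ≤ c ^ 2 * b ^ 2 := by
  have hbc : b * c ≤ -a := (le_div_iff₀ (by linarith)).mp h
  have hb : b ≤ 0 := by
    by_contra! hb
    linarith [mul_le_mul_of_nonneg_left hc hb.le]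
  have hbcb : b * c ≤ b := by nlinarith
  calc a ^ 2 ≤ (-(b * c)) ^ 2 := sq_le_sq' (by linarith) (by linarith)
    _ = c ^ 2 * b ^ 2 := by ring

theorem caseA_lower_bound_general (n : ℕ) (x : Fin n → ℝ) (hx : x ∈ Gamma2 n)
    (jmax jmin : Fin n) (hjmax : ∀ i, x i ≤ x jmax) (hjmin : ∀ i, x jmin ≤ x i)
    (h : x jmin ≤ -(x jmax) / (n : ℝ)) :
    ((x jmax) ^ 2 / (n : ℝ) ^ 3) * ∑ i, (esymm n 1 x - x i)
      ≤ ∑ i, (esymm n 1 x - x i) * (x i) ^ 2 := by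
  set f := fun i => esymm n 1 x - x i
  have hf : ∀ i, 0 < f i := esymm_one_sub_pos_of_mem_Gamma2 hx
  have hn : (1 : ℝ) ≤ n := by exact_mod_cast jmax.pos
  have hsum : ∑ i, f i ≤ n * f jmin := by
    simpa using Finset.sum_le_card_nsmul Finset.univ f (f jmin) fun i _ =>
      sub_le_sub_left (hjmin i) _
  have hsq := sq_le_sq_mul_sq_of_le_neg_div hn (hjmax jmin) h
  calc (x jmax ^ 2 / n ^ 3) * ∑ i, f i
      ≤ (x jmax ^ 2 / n ^ 3) * (n * f jmin) := by gcongr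
    _ ≤ (n ^ 2 * x jmin ^ 2 / n ^ 3) * (n * f jmin) := by
        have hfmin := (hf jmin).le
        gcongr
    _ = f jmin * x jmin ^ 2 := by field_simp
    _ ≤ ∑ i, f i * x i ^ 2 :=
      Finset.single_le_sum (f := fun i => f i * x i ^ 2)
        (fun i _ => mul_nonneg (hf i).le (sq_nonneg _)) (Finset.mem_univ jmin)

/-- for `λ ∈ Γ₂` with `λ_min ≤ −λ_max/n`, one has
`Σ_i (σ_1(λ) − λ_i)·λ_i² ≥ (λ_max²/n³)·Σ_i (σ_1(λ) − λ_i)`. -/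
theorem caseA_lower_bound (n : ℕ) (hn : 2 ≤ n) (x : Fin n → ℝ) (hx : x ∈ Gamma2 n)
    (jmax jmin : Fin n) (hjmax : ∀ i, x i ≤ x jmax) (hjmin : ∀ i, x jmin ≤ x i)
    (h : x jmin ≤ -(x jmax) / (n : ℝ)) :
    ((x jmax) ^ 2 / (n : ℝ) ^ 3) * ∑ i, (esymm n 1 x - x i)
      ≤ ∑ i, (esymm n 1 x - x i) * (x i) ^ 2 :=
  caseA_lower_bound_general n x hx jmax jmin hjmax hjmin h
end
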